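/- Let A be an n×n SPD matrix, A_c an n_c×n_c SPD matrix, P an n×n_c matrix with PᵗAP = A_c (Galerkin condition), and let G, T be n×n matrices with T = I − P A_c⁻¹ PᵗA and ‖G‖_A ≤ 1. Suppose ‖(P V_c A_c⁻¹ Pᵗ A + T) G‖_A ≤ ρ for some n_c×n_c matrix V_c and ρ ≥ 0, and let E_c be any n_c×n_c matrix. Then ‖(P (V_c + E_c) A_c⁻¹ Pᵗ A + T) G‖_A ≤ ρ + ‖E_c‖_{A_c}. -/

import Mathlib

open Matrix

noncomputable def vnorm {n : ℕ} (x : Fin n → ℝ) : ℝ := Real.sqrt (x ⬝ᵥ x)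

noncomputable def enorm {n : ℕ} (A : Matrix (Fin n) (Fin n) ℝ) (x : Fin n → ℝ) : ℝ :=
  Real.sqrt (A.mulVec x ⬝ᵥ x)

noncomputable def specNorm {m n : ℕ} (M : Matrix (Fin m) (Fin n) ℝ) : ℝ :=
  ⨆ x : {x : Fin n → ℝ // vnorm x = 1}, vnorm (M.mulVec x.1)

noncomputable def eOpNorm {n : ℕ} (A M : Matrix (Fin n) (Fin n) ℝ) : ℝ :=
  ⨆ x : {x : Fin n → ℝ // enorm A x = 1}, enorm A (M.mulVec x.1)

/-- P has full column rank. -/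
def FullColRank {n nc : ℕ} (P : Matrix (Fin n) (Fin nc) ℝ) : Prop :=
  LinearIndependent ℝ (fun j : Fin nc => (fun i : Fin n => P i j))

/-!
The new iteration matrix differs from the old one by `P Ec Ac⁻¹ Pᵀ A G`, so by the triangle
inequality for the energy operator norm it suffices to bound this perturbation by `‖Ec‖_{Ac}`.
By the Galerkin condition `P` is an isometry from the `Ac`-norm to the `A`-norm, and
`Ac⁻¹ Pᵀ A` is a contraction from the `A`-norm to the `Ac`-norm, since `P Ac⁻¹ Pᵀ A` is the
`A`-orthogonal projection onto the range of `P`. With `‖G‖_A ≤ 1` the bound follows.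
-/

open scoped MatrixOrder Matrix.Norms.L2Operator

section EnergyNorm

variable {n : ℕ} {A : Matrix (Fin n) (Fin n) ℝ}

lemma vnorm_eq_norm_toLp (x : Fin n → ℝ) : vnorm x = ‖WithLp.toLp 2 x‖ := by
  rw [EuclideanSpace.norm_eq, vnorm, dotProduct]
  congr 1
  refine Finset.sum_congr rfl fun i _ => ?_
  rw [Real.norm_eq_abs, sq_abs, sq]

lemma Matrix.IsSymm.mulVec_dotProduct_comm {ι α : Type*} [Fintype ι] [CommSemiring α]
    {B : Matrix ι ι α} (hB : B.IsSymm) (x y : ι → α) : B *ᵥ x ⬝ᵥ y = x ⬝ᵥ B *ᵥ y := by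
  rw [dotProduct_mulVec, ← mulVec_transpose, hB.eq, dotProduct_comm]

lemma enorm_eq_vnorm_sqrt_mulVec (hA : A.PosSemidef) (x : Fin n → ℝ) :
    enorm A x = vnorm (CFC.sqrt A *ᵥ x) := by
  have hsq : CFC.sqrt A * CFC.sqrt A = A := CFC.sqrt_mul_sqrt_self A hA.nonneg
  have hsymm : (CFC.sqrt A).IsSymm :=
    isHermitian_iff_isSymm.mp (CFC.sqrt_nonneg A).posSemidef.isHermitian
  unfold _root_.enorm vnorm
  rw [← hsymm.mulVec_dotProduct_comm, mulVec_mulVec, hsq]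

lemma enorm_add_le_of_posSemidef (hA : A.PosSemidef) (x y : Fin n → ℝ) :
    enorm A (x + y) ≤ enorm A x + enorm A y := by
  simp only [enorm_eq_vnorm_sqrt_mulVec hA, mulVec_add, vnorm_eq_norm_toLp, WithLp.toLp_add]
  exact norm_add_le _ _

lemma enorm_smul_eq_abs_mul (A : Matrix (Fin n) (Fin n) ℝ) (c : ℝ) (x : Fin n → ℝ) :
    enorm A (c • x) = |c| * enorm A x := by
  unfold _root_.enorm
  rw [mulVec_smul, smul_dotProduct, dotProduct_smul, smul_eq_mul, smul_eq_mul,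
    ← mul_assoc, ← sq, Real.sqrt_mul (sq_nonneg c), Real.sqrt_sq_eq_abs]

lemma enorm_pos_of_posDef (hA : A.PosDef) {x : Fin n → ℝ} (hx : x ≠ 0) : 0 < enorm A x := by
  unfold _root_.enorm
  rw [Real.sqrt_pos, dotProduct_comm]
  exact hA.dotProduct_mulVec_pos hx

/-- Conjugating by `√A` turns the energy norm into the Euclidean norm, where `M` acts as the
bounded operator `√A M √A⁻¹`. -/
lemma exists_enorm_mulVec_le (hA : A.PosDef) (M : Matrix (Fin n) (Fin n) ℝ) :
    ∃ C : ℝ, ∀ y, enorm A (M *ᵥ y) ≤ C * enorm A y := by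
  set S := CFC.sqrt A
  have hS : IsUnit S.det := by
    rw [isUnit_iff_ne_zero]
    intro h
    have hdet : A.det = 0 := by
      rw [← CFC.sqrt_mul_sqrt_self A hA.posSemidef.nonneg, det_mul, h, zero_mul]
    exact hA.det_pos.ne' hdet
  refine ⟨‖S * M * S⁻¹‖, fun y => ?_⟩
  have hconj : S *ᵥ (M *ᵥ y) = (S * M * S⁻¹) *ᵥ (S *ᵥ y) := by
    rw [mulVec_mulVec, mulVec_mulVec, Matrix.mul_assoc, Matrix.mul_assoc,
      nonsing_inv_mul S hS, Matrix.mul_one]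
  rw [enorm_eq_vnorm_sqrt_mulVec hA.posSemidef, enorm_eq_vnorm_sqrt_mulVec hA.posSemidef, hconj,
    vnorm_eq_norm_toLp, vnorm_eq_norm_toLp]
  exact l2_opNorm_mulVec (S * M * S⁻¹) (WithLp.toLp 2 (S *ᵥ y))

end EnergyNorm

section EnergyOperatorNorm

variable {n : ℕ} {A : Matrix (Fin n) (Fin n) ℝ}

lemma eOpNorm_nonneg (A M : Matrix (Fin n) (Fin n) ℝ) : 0 ≤ eOpNorm A M :=
  Real.iSup_nonneg fun _ => Real.sqrt_nonneg _

lemma eOpNorm_le_of_forall {M : Matrix (Fin n) (Fin n) ℝ} {c : ℝ} (hc : 0 ≤ c)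
    (h : ∀ x, enorm A x = 1 → enorm A (M *ᵥ x) ≤ c) : eOpNorm A M ≤ c :=
  Real.iSup_le (fun x => h x.1 x.2) hc

lemma enorm_mulVec_le_of_enorm_eq_one (hA : A.PosDef) (M : Matrix (Fin n) (Fin n) ℝ)
    {x : Fin n → ℝ} (hx : enorm A x = 1) : enorm A (M *ᵥ x) ≤ eOpNorm A M := by
  obtain ⟨C, hC⟩ := exists_enorm_mulVec_le hA M
  have hbdd : BddAbove (Set.range fun x : {x // enorm A x = 1} => enorm A (M *ᵥ x.1)) := by
    refine ⟨C, ?_⟩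
    rintro _ ⟨y, rfl⟩
    simpa [y.2] using hC y.1
  exact le_ciSup hbdd ⟨x, hx⟩

lemma enorm_mulVec_le (hA : A.PosDef) (M : Matrix (Fin n) (Fin n) ℝ) (y : Fin n → ℝ) :
    enorm A (M *ᵥ y) ≤ eOpNorm A M * enorm A y := by
  rcases eq_or_ne y 0 with rfl | hy
  · simp [_root_.enorm]
  have ht := enorm_pos_of_posDef hA hy
  have hunit : enorm A ((enorm A y)⁻¹ • y) = 1 := by
    rw [enorm_smul_eq_abs_mul, abs_of_pos (inv_pos.mpr ht), inv_mul_cancel₀ ht.ne']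
  have h := enorm_mulVec_le_of_enorm_eq_one hA M hunit
  rw [mulVec_smul, enorm_smul_eq_abs_mul, abs_of_pos (inv_pos.mpr ht), inv_mul_le_iff₀ ht] at h
  linarith

lemma eOpNorm_add_le (hA : A.PosDef) (M N : Matrix (Fin n) (Fin n) ℝ) :
    eOpNorm A (M + N) ≤ eOpNorm A M + eOpNorm A N := by
  refine eOpNorm_le_of_forall (add_nonneg (eOpNorm_nonneg _ _) (eOpNorm_nonneg _ _))
    fun x hx => ?_
  rw [add_mulVec]
  exact (enorm_add_le_of_posSemidef hA.posSemidef _ _).trans (add_le_add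
    (enorm_mulVec_le_of_enorm_eq_one hA M hx) (enorm_mulVec_le_of_enorm_eq_one hA N hx))

end EnergyOperatorNorm

section Galerkin

variable {n nc : ℕ} {A : Matrix (Fin n) (Fin n) ℝ} {Ac : Matrix (Fin nc) (Fin nc) ℝ}
  {P : Matrix (Fin n) (Fin nc) ℝ}

lemma mulVec_dotProduct_of_galerkin (hGal : Pᵀ * A * P = Ac) (w : Fin nc → ℝ) :
    A *ᵥ (P *ᵥ w) ⬝ᵥ P *ᵥ w = Ac *ᵥ w ⬝ᵥ w := by
  rw [dotProduct_mulVec, ← mulVec_transpose, mulVec_mulVec, mulVec_mulVec, hGal]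

lemma enorm_mulVec_of_galerkin (hGal : Pᵀ * A * P = Ac) (w : Fin nc → ℝ) :
    enorm A (P *ᵥ w) = enorm Ac w := by
  unfold _root_.enorm
  rw [mulVec_dotProduct_of_galerkin hGal]

/-- With `w := P Ac⁻¹ Pᵀ A y`, the residual `y - w` is `A`-orthogonal to `w`, so
`‖y‖_A² = ‖w‖_A² + ‖y - w‖_A² ≥ ‖w‖_A²`, and `‖w‖_A` is the `Ac`-norm of `Ac⁻¹ Pᵀ A y`. -/
lemma enorm_coarse_restriction_le (hA : A.PosSemidef) (hAc : IsUnit Ac)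
    (hGal : Pᵀ * A * P = Ac) (y : Fin n → ℝ) :
    enorm Ac ((Ac⁻¹ * Pᵀ * A) *ᵥ y) ≤ enorm A y := by
  set z := (Ac⁻¹ * Pᵀ * A) *ᵥ y
  set w := P *ᵥ z
  set d := y - w
  have hrestrict : (Pᵀ * A) *ᵥ w = (Pᵀ * A) *ᵥ y := by
    rw [mulVec_mulVec, hGal, mulVec_mulVec, ← Matrix.mul_assoc, ← Matrix.mul_assoc,
      mul_nonsing_inv Ac ((isUnit_iff_isUnit_det Ac).mp hAc), Matrix.one_mul]
  have horth : A *ᵥ d ⬝ᵥ w = 0 := by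
    rw [dotProduct_mulVec, ← mulVec_transpose, mulVec_mulVec, mulVec_sub, hrestrict, sub_self,
      zero_dotProduct]
  have horth' : A *ᵥ w ⬝ᵥ d = 0 := by
    rw [(isHermitian_iff_isSymm.mp hA.isHermitian).mulVec_dotProduct_comm, dotProduct_comm,
      horth]
  have hpyth : A *ᵥ y ⬝ᵥ y = A *ᵥ w ⬝ᵥ w + A *ᵥ d ⬝ᵥ d := by
    have hy : y = w + d := (add_sub_cancel w y).symm
    rw [hy, mulVec_add, add_dotProduct, dotProduct_add, dotProduct_add, horth, horth']
    ring
  have hd : 0 ≤ A *ᵥ d ⬝ᵥ d := by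
    rw [dotProduct_comm]
    exact hA.dotProduct_mulVec_nonneg d
  unfold _root_.enorm
  rw [← mulVec_dotProduct_of_galerkin hGal z, hpyth]
  exact Real.sqrt_le_sqrt (le_add_of_nonneg_right hd)

lemma eOpNorm_coarse_correction_le (hA : A.PosDef) (hAc : Ac.PosDef) (hGal : Pᵀ * A * P = Ac)
    (E : Matrix (Fin nc) (Fin nc) ℝ) (G : Matrix (Fin n) (Fin n) ℝ) :
    eOpNorm A (P * E * Ac⁻¹ * Pᵀ * A * G) ≤ eOpNorm Ac E * eOpNorm A G := by
  refine eOpNorm_le_of_forall (mul_nonneg (eOpNorm_nonneg _ _) (eOpNorm_nonneg _ _))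
    fun x hx => ?_
  have hfactor : (P * E * Ac⁻¹ * Pᵀ * A * G) *ᵥ x
      = P *ᵥ (E *ᵥ ((Ac⁻¹ * Pᵀ * A) *ᵥ (G *ᵥ x))) := by
    simp only [mulVec_mulVec, Matrix.mul_assoc]
  have hrestrict : enorm Ac ((Ac⁻¹ * Pᵀ * A) *ᵥ (G *ᵥ x)) ≤ eOpNorm A G :=
    (enorm_coarse_restriction_le hA.posSemidef hAc.isUnit hGal _).trans
      (enorm_mulVec_le_of_enorm_eq_one hA G hx)
  rw [hfactor, enorm_mulVec_of_galerkin hGal]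
  exact (enorm_mulVec_le hAc E _).trans
    (mul_le_mul_of_nonneg_left hrestrict (eOpNorm_nonneg _ _))

end Galerkin

theorem stmt13_general {n nc : ℕ} (A : Matrix (Fin n) (Fin n) ℝ)
    (Ac : Matrix (Fin nc) (Fin nc) ℝ) (P : Matrix (Fin n) (Fin nc) ℝ)
    (G T : Matrix (Fin n) (Fin n) ℝ) (Vc Ec : Matrix (Fin nc) (Fin nc) ℝ)
    (ρ : ℝ)
    (hA : A.PosDef) (hAc : Ac.PosDef) (hGal : Pᵀ * A * P = Ac)
    (hG : eOpNorm A G ≤ 1)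
    (hV : eOpNorm A ((P * Vc * Ac⁻¹ * Pᵀ * A + T) * G) ≤ ρ) :
    eOpNorm A ((P * (Vc + Ec) * Ac⁻¹ * Pᵀ * A + T) * G) ≤ ρ + eOpNorm Ac Ec := by
  have hsplit : (P * (Vc + Ec) * Ac⁻¹ * Pᵀ * A + T) * G
      = (P * Vc * Ac⁻¹ * Pᵀ * A + T) * G + P * Ec * Ac⁻¹ * Pᵀ * A * G := by
    simp only [Matrix.mul_add, Matrix.add_mul]
    abel
  have hcoarse : eOpNorm A (P * Ec * Ac⁻¹ * Pᵀ * A * G) ≤ eOpNorm Ac Ec :=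
    (eOpNorm_coarse_correction_le hA hAc hGal Ec G).trans
      (mul_le_of_le_one_right (eOpNorm_nonneg _ _) hG)
  rw [hsplit]
  exact (eOpNorm_add_le hA _ _).trans (add_le_add hV hcoarse)

theorem stmt13 {n nc : ℕ} (A : Matrix (Fin n) (Fin n) ℝ)
    (Ac : Matrix (Fin nc) (Fin nc) ℝ) (P : Matrix (Fin n) (Fin nc) ℝ)
    (G T : Matrix (Fin n) (Fin n) ℝ) (Vc Ec : Matrix (Fin nc) (Fin nc) ℝ)
    (ρ : ℝ) (hρ : 0 ≤ ρ)
    (hA : A.PosDef) (hAc : Ac.PosDef) (hGal : Pᵀ * A * P = Ac) (hP : FullColRank P)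
    (hT : T = 1 - P * Ac⁻¹ * Pᵀ * A)
    (hG : eOpNorm A G ≤ 1)
    (hV : eOpNorm A ((P * Vc * Ac⁻¹ * Pᵀ * A + T) * G) ≤ ρ) :
    eOpNorm A ((P * (Vc + Ec) * Ac⁻¹ * Pᵀ * A + T) * G) ≤ ρ + eOpNorm Ac Ec :=
  stmt13_general A Ac P G T Vc Ec ρ hA hAc hGal hG hV
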